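/- Let M be a matroid and m a positive integer. If mM denotes the matroid obtained from M by replacing every element with m parallel copies, then T(mM; x, y) = ((1−yᵐ)/(1−y))^{r(M)} · T(M; (xy − x − y + yᵐ)/(yᵐ − 1), yᵐ), as an identity of rational functions (equivalently, after clearing denominators, of polynomials). -/

import Mathlib

open Finset
open scoped Classical

noncomputable section

variable {β : Type*} [Fintype β]

/-- The (ℕ-valued) rank of a set in a matroid: the maximal size of an independent
subset. -/
def mrank (M : Matroid β) (S : Finset β) : ℕ :=
  sSup {c | ∃ I : Finset β, I ⊆ S ∧ M.Indep ↑I ∧ I.card = c}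

/-- `C` is a circuit of `M`: a minimal dependent set. -/
def MIsCircuit {α : Type*} (M : Matroid α) (C : Set α) : Prop :=
  M.Dep C ∧ ∀ e ∈ C, M.Indep (C \ {e})

/-- `ex(I)`: the externally active elements of `I`, i.e. the elements `e` that are
smallest in some circuit contained in `I ∪ {e}`. -/
def mexSet {α : Type*} [LinearOrder α] (M : Matroid α) (I : Set α) : Set α :=
  {e | ∃ C, MIsCircuit M C ∧ C ⊆ insert e I ∧ e ∈ C ∧ ∀ f ∈ C, e ≤ f}

/-- `in(B)`: the internally active elements of the basis `B`, i.e. the elements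
`e ∈ B` that are smallest in some cocircuit contained in `E − (B − e)`. -/
def minSet {α : Type*} [LinearOrder α] (M : Matroid α) (B : Set α) : Set α :=
  {e | e ∈ B ∧ ∃ D, MIsCircuit M✶ D ∧ D ⊆ (M.E \ B) ∪ {e} ∧ e ∈ D ∧ ∀ f ∈ D, e ≤ f}

/-- Corank-nullity Tutte polynomial evaluation. -/
def tutteEval {α : Type*} [Fintype α] [DecidableEq α] {R : Type*} [CommRing R]
    (r : Finset α → ℕ) (x y : R) : R :=
  ∑ S : Finset α, (x - 1) ^ (r Finset.univ - r S) * (y - 1) ^ (S.card - r S)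

end

section
set_option linter.unusedSectionVars false
variable {α : Type*} [Fintype α] [DecidableEq α] {m : ℕ}

lemma mrank_set_nonempty (M : Matroid α) (S : Finset α) :
    {c | ∃ I : Finset α, I ⊆ S ∧ M.Indep ↑I ∧ I.card = c}.Nonempty :=
  ⟨0, ∅, by simp⟩

lemma mrank_comap (M : Matroid α) (S : Finset (α × Fin m)) :
    mrank (M.comap (Prod.fst : α × Fin m → α)) S = mrank M (S.image Prod.fst) := by
  unfold mrank
  congr 1
  ext c
  constructor
  · rintro ⟨I, hIS, hind, rfl⟩
    rw [Matroid.comap_indep_iff] at hind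
    refine ⟨I.image Prod.fst, Finset.image_subset_image hIS, ?_, ?_⟩
    · rw [Finset.coe_image]; exact hind.1
    · exact Finset.card_image_of_injOn hind.2
  · rintro ⟨J, hJS, hind, rfl⟩
    have hch : ∀ a ∈ J, ∃ j : Fin m, (a, j) ∈ S := by
      intro a ha
      have := hJS ha
      simp only [Finset.mem_image] at this
      obtain ⟨p, hp, rfl⟩ := this
      exact ⟨p.2, hp⟩
    choose σ hσ using hch
    have himg : (Prod.fst : α × Fin m → α) '' ↑(J.attach.image (fun a => (a.1, σ a.1 a.2))) = ↑J := by
      ext a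
      simp only [Finset.coe_image, Set.mem_image, Finset.mem_coe, Finset.mem_image,
        Finset.mem_attach, true_and, Finset.mem_coe]
      constructor
      · rintro ⟨p, ⟨b, rfl⟩, rfl⟩; exact b.2
      · intro ha; exact ⟨(a, σ a ha), ⟨⟨a, ha⟩, rfl⟩, rfl⟩
    refine ⟨J.attach.image (fun a => (a.1, σ a.1 a.2)), ?_, ?_, ?_⟩
    · intro p hp
      simp only [Finset.mem_image, Finset.mem_attach, true_and] at hp
      obtain ⟨a, rfl⟩ := hp
      exact hσ a.1 a.2
    · rw [Matroid.comap_indep_iff, himg]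
      refine ⟨hind, ?_⟩
      intro p hp q hq hpq
      simp only [Finset.mem_coe, Finset.mem_image, Finset.mem_attach, true_and] at hp hq
      obtain ⟨a, rfl⟩ := hp
      obtain ⟨b, rfl⟩ := hq
      simp only at hpq
      simp [hpq]
    · rw [Finset.card_image_of_injective _ (fun a b h => by
        apply Subtype.ext; exact congrArg Prod.fst h), Finset.card_attach]

lemma mrank_le_card (M : Matroid α) (S : Finset α) : mrank M S ≤ S.card := by
  refine csSup_le (mrank_set_nonempty M S) ?_
  rintro c ⟨I, hIS, -, rfl⟩
  exact Finset.card_le_card hIS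

lemma mrank_mono (M : Matroid α) {S T : Finset α} (h : S ⊆ T) : mrank M S ≤ mrank M T := by
  refine csSup_le_csSup ⟨T.card, ?_⟩ (mrank_set_nonempty M S) ?_
  · rintro c ⟨I, hIS, -, rfl⟩
    exact Finset.card_le_card hIS
  · rintro c ⟨I, hIS, hind, rfl⟩
    exact ⟨I, hIS.trans h, hind, rfl⟩

end

lemma alg {K : Type*} [Field K] (p d q : K) (hd : d ≠ 0) (hq : q ≠ 0)
    (R a b : ℕ) (hab : a ≤ b) (haR : a ≤ R) :
    p ^ (R - a) * (d ^ a)⁻¹ * q ^ b =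
      (q / d) ^ R * ((p * d / q) ^ (R - a) * q ^ (b - a)) := by
  rw [div_pow, div_pow, mul_pow]
  rw [pow_sub₀ d hd haR, pow_sub₀ q hq haR, pow_sub₀ q hq hab]
  field_simp

section
set_option linter.unusedSectionVars false
variable {α : Type*} [Fintype α] [DecidableEq α] {m : ℕ}

lemma tutte_parallel (M : Matroid α) (m : ℕ) (hm : 0 < m)
    {K : Type*} [Field K] (x y : K) (hy : y - 1 ≠ 0) (hym : y ^ m - 1 ≠ 0) :
    tutteEval (mrank (M.comap (Prod.fst : α × Fin m → α))) x y =
      ((1 - y ^ m) / (1 - y)) ^ (mrank M Finset.univ) *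
        tutteEval (mrank M) ((x * y - x - y + y ^ m) / (y ^ m - 1)) (y ^ m) := by
  have hFin : Nonempty (Fin m) := ⟨⟨0, hm⟩⟩
  set R := mrank M Finset.univ with hR
  -- the bijection between subsets of α × Fin m and functions α → Finset (Fin m)
  set e : (α → Finset (Fin m)) → Finset (α × Fin m) :=
    fun g => univ.filter (fun p => p.2 ∈ g p.1) with he
  have hbij : Function.Bijective e := by
    rw [Function.bijective_iff_has_inverse]
    refine ⟨fun S a => univ.filter (fun j => (a, j) ∈ S), ?_, ?_⟩
    · intro g; funext a; ext j; simp [he]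
    · intro S; ext p; simp [he]
  have hcard : ∀ g, (e g).card = ∑ a, (g a).card := by
    intro g
    rw [he, Finset.card_filter, Fintype.sum_prod_type]
    refine Finset.sum_congr rfl fun a _ => ?_
    simp [Finset.sum_ite_mem]
  have himg : ∀ g, (e g).image Prod.fst = univ.filter (fun a => (g a).Nonempty) := by
    intro g
    ext a
    simp only [he, Finset.mem_image, Finset.mem_filter, Finset.mem_univ, true_and]
    constructor
    · rintro ⟨p, hp, rfl⟩; exact ⟨p.2, hp⟩
    · rintro ⟨j, hj⟩; exact ⟨(a, j), hj, rfl⟩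
  have huniv : mrank (M.comap (Prod.fst : α × Fin m → α)) Finset.univ = R := by
    rw [mrank_comap]
    congr 1
    ext a
    simp only [Finset.mem_image, Finset.mem_univ, true_and, iff_true]
    exact ⟨(a, ⟨0, hm⟩), rfl⟩
  -- abbreviations
  set A : (α → Finset (Fin m)) → Finset α :=
    fun g => univ.filter (fun a => (g a).Nonempty) with hA
  have hstep1 : tutteEval (mrank (M.comap (Prod.fst : α × Fin m → α))) x y =
      ∑ g : α → Finset (Fin m),
        ((x - 1) ^ (R - mrank M (A g)) * ((y - 1) ^ (mrank M (A g)))⁻¹)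
          * (y - 1) ^ (∑ a, (g a).card) := by
    rw [tutteEval]
    rw [← Fintype.sum_bijective e hbij _ _ (fun g => rfl)]
    refine Finset.sum_congr rfl fun g _ => ?_
    have hr : mrank (M.comap (Prod.fst : α × Fin m → α)) (e g) = mrank M (A g) := by
      rw [mrank_comap, himg]
    have hle1 : mrank M (A g) ≤ (A g).card := mrank_le_card M (A g)
    have hle2 : (A g).card ≤ ∑ a, (g a).card := by
      calc (A g).card = ∑ a ∈ A g, 1 := by simp
        _ ≤ ∑ a ∈ A g, (g a).card := by
            refine Finset.sum_le_sum fun a ha => ?_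
            rw [hA] at ha
            simp only [Finset.mem_filter] at ha
            exact Finset.card_pos.mpr ha.2
        _ ≤ ∑ a, (g a).card := Finset.sum_le_sum_of_subset (Finset.subset_univ _)
    rw [huniv, hr, hcard, pow_sub₀ (y - 1) hy (hle1.trans hle2)]
    ring
  rw [hstep1]
  -- group by the support A
  rw [← Finset.sum_fiberwise univ A
    (fun g => ((x - 1) ^ (R - mrank M (A g)) * ((y - 1) ^ (mrank M (A g)))⁻¹)
          * (y - 1) ^ (∑ a, (g a).card))]
  -- compute the inner sums
  have hall : (∑ t : Finset (Fin m), (y - 1) ^ t.card) = y ^ m := by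
    have h := Finset.prod_add (fun _ : Fin m => y - 1) (fun _ : Fin m => (1 : K)) Finset.univ
    simp only [Finset.prod_const, Finset.prod_const_one, one_pow, mul_one, sub_add_cancel,
      Finset.card_univ, Fintype.card_fin] at h
    calc (∑ t : Finset (Fin m), (y - 1) ^ t.card)
        = ∑ t ∈ (Finset.univ : Finset (Fin m)).powerset, (y - 1) ^ t.card := by
          rw [Finset.powerset_univ]
      _ = y ^ m := h.symm
  have hne : (∑ t ∈ (univ : Finset (Finset (Fin m))).filter Finset.Nonempty, (y - 1) ^ t.card) = y ^ m - 1 := by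
    have h2 := Finset.sum_filter_add_sum_filter_not (univ : Finset (Finset (Fin m)))
      Finset.Nonempty (fun t => (y - 1) ^ t.card)
    have h3 : (univ : Finset (Finset (Fin m))).filter (fun t => ¬ t.Nonempty) = {∅} := by
      ext t; simp [Finset.not_nonempty_iff_eq_empty]
    rw [h3, Finset.sum_singleton, hall] at h2
    simp only [Finset.card_empty, pow_zero] at h2
    linear_combination h2
  have hinner : ∀ B : Finset α,
      (∑ g ∈ univ.filter (fun g => A g = B), (y - 1) ^ (∑ a, (g a).card))
        = (y ^ m - 1) ^ B.card := by
    intro B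
    have hfil : univ.filter (fun g => A g = B)
        = Fintype.piFinset (fun a => if a ∈ B then (univ : Finset (Finset (Fin m))).filter Finset.Nonempty
            else ({∅} : Finset (Finset (Fin m)))) := by
      ext g
      simp only [Finset.mem_filter, Finset.mem_univ, true_and, Fintype.mem_piFinset]
      constructor
      · intro h a
        rw [hA] at h
        have := Finset.ext_iff.mp h a
        simp only [Finset.mem_filter, Finset.mem_univ, true_and] at this
        by_cases hB : a ∈ B
        · simp [hB, this.mpr hB]
        · simp [hB, Finset.not_nonempty_iff_eq_empty.mp (fun hne' => hB (this.mp hne'))]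
      · intro h
        rw [hA]
        ext a
        have := h a
        simp only [Finset.mem_filter, Finset.mem_univ, true_and]
        by_cases hB : a ∈ B
        · simp only [hB, if_pos] at this
          simp only [Finset.mem_filter, Finset.mem_univ, true_and] at this
          simp [hB, this]
        · simp only [hB, if_neg, not_false_iff] at this
          simp only [Finset.mem_singleton] at this
          simp [hB, this]
    rw [hfil]
    have : ∀ g : α → Finset (Fin m), (y - 1) ^ (∑ a, (g a).card)
        = ∏ a, (y - 1) ^ (g a).card := by
      intro g; rw [Finset.prod_pow_eq_pow_sum]
    simp_rw [this]
    rw [← Finset.prod_univ_sum (fun a => if a ∈ B then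
        (univ : Finset (Finset (Fin m))).filter Finset.Nonempty
        else ({∅} : Finset (Finset (Fin m)))) (fun _ t => (y - 1) ^ t.card)]
    have : ∀ a : α, (∑ t ∈ (if a ∈ B then (univ : Finset (Finset (Fin m))).filter Finset.Nonempty
          else ({∅} : Finset (Finset (Fin m)))), (y - 1) ^ t.card)
        = if a ∈ B then y ^ m - 1 else 1 := by
      intro a
      by_cases hB : a ∈ B
      · simp only [hB, if_pos]; exact hne
      · simp [hB]
    simp_rw [this]
    rw [Finset.prod_ite_mem, Finset.univ_inter, Finset.prod_const]
  -- now both sides are sums over Finsets of α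
  have hRHS : ((1 - y ^ m) / (1 - y)) ^ R *
      tutteEval (mrank M) ((x * y - x - y + y ^ m) / (y ^ m - 1)) (y ^ m)
      = ∑ B : Finset α, ((y ^ m - 1) / (y - 1)) ^ R *
          (((x - 1) * (y - 1) / (y ^ m - 1)) ^ (R - mrank M B)
            * (y ^ m - 1) ^ (B.card - mrank M B)) := by
    rw [tutteEval, Finset.mul_sum]
    refine Finset.sum_congr rfl fun B _ => ?_
    have e1 : (1 - y ^ m) / (1 - y) = (y ^ m - 1) / (y - 1) := by
      rw [div_eq_div_iff (by intro h; apply hy; linear_combination -h) hy]; ring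
    have e2 : (x * y - x - y + y ^ m) / (y ^ m - 1) - 1 = (x - 1) * (y - 1) / (y ^ m - 1) := by
      field_simp; ring
    rw [e1, e2]
  rw [hRHS]
  refine Finset.sum_congr rfl fun B _ => ?_
  -- pull the constant out of the fiber sum
  have : ∀ g ∈ univ.filter (fun g => A g = B),
      ((x - 1) ^ (R - mrank M (A g)) * ((y - 1) ^ (mrank M (A g)))⁻¹)
          * (y - 1) ^ (∑ a, (g a).card)
      = ((x - 1) ^ (R - mrank M B) * ((y - 1) ^ (mrank M B))⁻¹)
          * (y - 1) ^ (∑ a, (g a).card) := by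
    intro g hg
    simp only [Finset.mem_filter] at hg
    rw [hg.2]
  rw [Finset.sum_congr rfl this, ← Finset.mul_sum, hinner B]
  exact alg (x - 1) (y - 1) (y ^ m - 1) hy hym R (mrank M B) B.card
    (mrank_le_card M B) (mrank_mono M (Finset.subset_univ B))

end

/-- parallel multiplication: if `mM` is obtained from `M` by replacing
every element by `m` parallel copies (realized as `M.comap Prod.fst` on `α × Fin m`),
then `T(mM; x, y) = ((1−y^m)/(1−y))^{r(M)} · T(M; (xy−x−y+y^m)/(y^m−1), y^m)`, as an
identity of rational functions in `x` and `y`. -/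
theorem statement9 {α : Type*} [Fintype α] [DecidableEq α]
    (M : Matroid α) (hE : M.E = Set.univ) (m : ℕ) (hm : 0 < m) :
    tutteEval (mrank (M.comap (Prod.fst : α × Fin m → α)))
        (algebraMap (MvPolynomial (Fin 2) ℚ)
          (FractionRing (MvPolynomial (Fin 2) ℚ)) (MvPolynomial.X 0))
        (algebraMap (MvPolynomial (Fin 2) ℚ)
          (FractionRing (MvPolynomial (Fin 2) ℚ)) (MvPolynomial.X 1)) =
      (let x := algebraMap (MvPolynomial (Fin 2) ℚ)
          (FractionRing (MvPolynomial (Fin 2) ℚ)) (MvPolynomial.X 0)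
       let y := algebraMap (MvPolynomial (Fin 2) ℚ)
          (FractionRing (MvPolynomial (Fin 2) ℚ)) (MvPolynomial.X 1)
       ((1 - y ^ m) / (1 - y)) ^ (mrank M Finset.univ) *
         tutteEval (mrank M) ((x * y - x - y + y ^ m) / (y ^ m - 1)) (y ^ m)) := by
  classical
  have hinj := IsFractionRing.injective (MvPolynomial (Fin 2) ℚ)
    (FractionRing (MvPolynomial (Fin 2) ℚ))
  set φ := algebraMap (MvPolynomial (Fin 2) ℚ) (FractionRing (MvPolynomial (Fin 2) ℚ)) with hφ
  have key : ∀ p : MvPolynomial (Fin 2) ℚ, p ≠ 0 → φ p ≠ 0 := by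
    intro p hp h0
    exact hp (hinj (by simpa using h0))
  have hy : φ (MvPolynomial.X 1) - 1 ≠ 0 := by
    rw [show φ (MvPolynomial.X 1) - 1 = φ (MvPolynomial.X 1 - 1) by
      rw [map_sub, map_one]]
    apply key
    intro h
    have h2 := congrArg (MvPolynomial.eval (fun _ => (2 : ℚ))) h
    simp at h2
    norm_num at h2
  have hym : φ (MvPolynomial.X 1) ^ m - 1 ≠ 0 := by
    rw [show φ (MvPolynomial.X 1) ^ m - 1 = φ (MvPolynomial.X 1 ^ m - 1) by
      rw [map_sub, map_one, map_pow]]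
    apply key
    intro h
    have h2 := congrArg (MvPolynomial.eval (fun _ => (2 : ℚ))) h
    have h3 : (1 : ℚ) < 2 ^ m := one_lt_pow₀ (by norm_num) hm.ne'
    simp at h2
    linarith
  exact tutte_parallel M m hm (φ (MvPolynomial.X 0)) (φ (MvPolynomial.X 1)) hy hym
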